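/- There do not exist a real number z₀ > 0, a natural number r, and a map H from [0, z₀] into the real symmetric r×r matrices, continuous on [0, z₀], with the following property: for every z ∈ [0, z₀] and every sequence Φ : ℤ → ℝ that is square-summable over j ≤ 0 and satisfies the first-order translatory extrapolation conditions Φ₂ = Φ₁ = Φ₀, setting Ψ_j := (A(z)Φ)_j for j ≤ 0 where A(z) is the fourth-order Strang scheme, one has ∑_{j ≤ −r} Ψ_j² + v(Ψ)ᵀ H(z) v(Ψ) ≤ ∑_{j ≤ −r} Φ_j² + v(Φ)ᵀ H(z) v(Φ), where v(Φ) := (Φ_{−r+1}, Φ_{−r+2}, …, Φ_0) ∈ ℝʳ. -/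
import Mathlib


/-- Backward difference `(DΦ)_j = Φ_j - Φ_{j-1}`. -/
noncomputable def Dd (Φ : ℤ → ℝ) (j : ℤ) : ℝ := Φ j - Φ (j - 1)

/-- Centered difference `(D₀Φ)_j = (Φ_{j+1} - Φ_{j-1})/2`. -/
noncomputable def D0 (Φ : ℤ → ℝ) (j : ℤ) : ℝ := (Φ (j + 1) - Φ (j - 1)) / 2

/-- Discrete Laplacian `(ΔΦ)_j = Φ_{j-1} - 2Φ_j + Φ_{j+1}`. -/
noncomputable def Lap (Φ : ℤ → ℝ) (j : ℤ) : ℝ := Φ (j - 1) - 2 * Φ j + Φ (j + 1)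

/-- `(DΔΦ)_j = (ΔΦ)_j - (ΔΦ)_{j-1}`. -/
noncomputable def DLap (Φ : ℤ → ℝ) (j : ℤ) : ℝ := Lap Φ j - Lap Φ (j - 1)

/-- `(D₀ΔΦ)_j = (-Φ_{j-2} + 2Φ_{j-1} - 2Φ_{j+1} + Φ_{j+2})/2`. -/
noncomputable def D0Lap (Φ : ℤ → ℝ) (j : ℤ) : ℝ :=
  (-Φ (j - 2) + 2 * Φ (j - 1) - 2 * Φ (j + 1) + Φ (j + 2)) / 2

/-- `(Δ²Φ)_j = Φ_{j-2} - 4Φ_{j-1} + 6Φ_j - 4Φ_{j+1} + Φ_{j+2}`. -/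
noncomputable def Lap2 (Φ : ℤ → ℝ) (j : ℤ) : ℝ :=
  Φ (j - 2) - 4 * Φ (j - 1) + 6 * Φ j - 4 * Φ (j + 1) + Φ (j + 2)

/-- The five point scheme `A(z)Φ = Φ - z D₀Φ + (z²/2) ΔΦ + σ D₀ΔΦ + τ Δ²Φ`. -/
noncomputable def A5 (z σ τ : ℝ) (Φ : ℤ → ℝ) (j : ℤ) : ℝ :=
  Φ j - z * D0 Φ j + z ^ 2 / 2 * Lap Φ j + σ * D0Lap Φ j + τ * Lap2 Φ j

open Matrix

/-- The fourth order Strang scheme. -/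
noncomputable def AStrang (z : ℝ) (Φ : ℤ → ℝ) (j : ℤ) : ℝ :=
  A5 z (z * (1 - z ^ 2) / 6) (-(z ^ 2 * (1 - z ^ 2)) / 24) Φ j

/-- The vector `(Φ_{-r+1}, …, Φ_0) ∈ ℝʳ` of boundary values. -/
noncomputable def bdryVec (r : ℕ) (Φ : ℤ → ℝ) : Fin r → ℝ :=
  fun i => Φ (-(r : ℤ) + 1 + (i : ℤ))

/-! ### Auxiliary construction for the counterexample -/

/-- The recursion `ψ(k+4) = 8ψ(k+3) - 8ψ(k+1) + ψ(k)`, which makes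
`(BΦ)_j = 0` where `B = -D₀ + D₀Δ/6` is the first-order-in-`z` part of
the Strang scheme, with initial data `1, 1, 1, 8`. -/
noncomputable def psi : ℕ → ℝ
  | 0 => 1
  | 1 => 1
  | 2 => 1
  | 3 => 8
  | (k+4) => 8 * psi (k+3) - 8 * psi (k+1) + psi k

lemma psi_rec (k : ℕ) : psi (k+4) = 8 * psi (k+3) - 8 * psi (k+1) + psi k := by
  rw [psi]

/-- The conserved "flux" of the recursion. -/
lemma psi_e (k : ℕ) :
    psi (k+3) * psi (k+1) + psi (k+2) * psi k - 8 * psi (k+2) * psi (k+1) = 1 := by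
  induction k with
  | zero => norm_num [psi]
  | succ n ih =>
      have h := psi_rec n
      simp only [show n+1+3 = n+4 by omega, show n+1+2 = n+3 by omega,
        show n+1+1 = n+2 by omega]
      linear_combination ih + psi (n+2) * h

/-- The counterexample sequence: `Φ_j = ψ(2-j)` for `-r-1 ≤ j ≤ 2`, `0` elsewhere. -/
noncomputable def PhiR (r : ℕ) : ℤ → ℝ := fun j =>
  if 0 ≤ 2 - j ∧ 2 - j ≤ (r : ℤ) + 3 then psi (2 - j).toNat else 0

lemma PhiR_spec (r k : ℕ) (hk : k ≤ r + 3) : PhiR r (2 - (k : ℤ)) = psi k := by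
  unfold PhiR
  rw [if_pos ⟨by omega, by omega⟩]
  congr 1
  omega

lemma PhiR_zero {r : ℕ} {j : ℤ} (h : j < -(r:ℤ) - 1 ∨ 2 < j) : PhiR r j = 0 := by
  unfold PhiR
  rw [if_neg (by omega)]

lemma PhiR_low (r : ℕ) : ∀ j : ℤ, j ≤ -(r:ℤ) - 2 → PhiR r j = 0 := fun _ hj =>
  PhiR_zero (Or.inl (by omega))

/-- The first-order-in-`z` part of the Strang scheme. -/
noncomputable def Bop (Φ : ℤ → ℝ) (j : ℤ) : ℝ :=
  (-Φ (j-2) + 8 * Φ (j-1) - 8 * Φ (j+1) + Φ (j+2)) / 12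

/-- The remainder of the Strang scheme: `A(z) = I + z B + z² C(z)`. -/
noncomputable def Cop (z : ℝ) (Φ : ℤ → ℝ) (j : ℤ) : ℝ :=
  Lap Φ j / 2 - z * D0Lap Φ j / 6 - (1 - z^2) * Lap2 Φ j / 24

lemma AStrang_decomp (z : ℝ) (Φ : ℤ → ℝ) (j : ℤ) :
    AStrang z Φ j = Φ j + z * Bop Φ j + z^2 * Cop z Φ j := by
  simp only [AStrang, A5, Bop, Cop, D0, Lap, D0Lap, Lap2]; ring

lemma AStrang_far (z : ℝ) (Φ : ℤ → ℝ) (j : ℤ)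
    (h0 : Φ (j-2) = 0) (h1 : Φ (j-1) = 0) (h2 : Φ j = 0) (h3 : Φ (j+1) = 0)
    (h4 : Φ (j+2) = 0) : AStrang z Φ j = 0 := by
  simp only [AStrang, A5, D0, Lap, D0Lap, Lap2, h0, h1, h2, h3, h4]; ring

lemma AStrang_low (r : ℕ) (z : ℝ) : ∀ j : ℤ, j ≤ -(r:ℤ) - 4 →
    AStrang z (PhiR r) j = 0 := by
  intro j hj
  exact AStrang_far z _ j (PhiR_low r _ (by omega)) (PhiR_low r _ (by omega))
    (PhiR_low r _ (by omega)) (PhiR_low r _ (by omega)) (PhiR_low r _ (by omega))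

/-- On the boundary window, `BΦ` vanishes. -/
lemma Bop_window (r m : ℕ) (hm : m + 1 ≤ r) :
    Bop (PhiR r) (2 - ((m:ℤ) + 2)) = 0 := by
  unfold Bop
  rw [show (2 - ((m:ℤ)+2)) - 2 = 2 - ((m+4 : ℕ):ℤ) by push_cast; ring,
      show (2 - ((m:ℤ)+2)) - 1 = 2 - ((m+3 : ℕ):ℤ) by push_cast; ring,
      show (2 - ((m:ℤ)+2)) + 1 = 2 - ((m+1 : ℕ):ℤ) by push_cast; ring,
      show (2 - ((m:ℤ)+2)) + 2 = 2 - ((m : ℕ):ℤ) by ring,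
      PhiR_spec r (m+4) (by omega), PhiR_spec r (m+3) (by omega),
      PhiR_spec r (m+1) (by omega), PhiR_spec r m (by omega)]
  linear_combination (-1/12 : ℝ) * psi_rec m

/-- The energy flux into the interior region is `1/12 > 0`. -/
lemma Tlem (r : ℕ) :
    PhiR r (-(r:ℤ)) * Bop (PhiR r) (-(r:ℤ))
      + PhiR r (-(r:ℤ) - 1) * Bop (PhiR r) (-(r:ℤ) - 1) = 1/12 := by
  unfold Bop
  rw [show -(r:ℤ) - 1 - 1 = -(r:ℤ) - 2 by ring]
  rw [show -(r:ℤ) - 1 + 1 = 2 - ((r+2:ℕ):ℤ) by push_cast; ring]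
  rw [show -(r:ℤ) - 1 + 2 = 2 - ((r+1:ℕ):ℤ) by push_cast; ring]
  rw [show -(r:ℤ) - 1 = 2 - ((r+3:ℕ):ℤ) by push_cast; ring]
  rw [show -(r:ℤ) + 1 = 2 - ((r+1:ℕ):ℤ) by push_cast; ring]
  rw [show -(r:ℤ) + 2 = 2 - ((r:ℕ):ℤ) by ring]
  rw [show -(r:ℤ) = 2 - ((r+2:ℕ):ℤ) by push_cast; ring]
  rw [PhiR_zero (r := r) (j := 2 - ((r+2:ℕ):ℤ) - 2) (by omega)]
  rw [PhiR_zero (r := r) (j := 2 - ((r+3:ℕ):ℤ) - 2) (by omega)]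
  rw [PhiR_spec r (r+2) (by omega), PhiR_spec r (r+1) (by omega),
      PhiR_spec r r (by omega), PhiR_spec r (r+3) (by omega)]
  have he := psi_e (r+1)
  simp only [show r+1+3 = r+4 by omega, show r+1+2 = r+3 by omega,
    show r+1+1 = r+2 by omega] at he
  linear_combination (1/12 : ℝ) * he - (psi (r+2) / 12) * psi_rec r

/-- The boundary correction vector. -/
noncomputable def wv (r : ℕ) (z : ℝ) : Fin r → ℝ :=
  fun i => Cop z (PhiR r) (-(r : ℤ) + 1 + (i : ℤ))

lemma hbd (r : ℕ) (z : ℝ) :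
    bdryVec r (AStrang z (PhiR r)) = bdryVec r (PhiR r) + z^2 • wv r z := by
  funext i
  have hi := i.2
  have hB : Bop (PhiR r) (-(r:ℤ) + 1 + (i:ℤ)) = 0 := by
    have h : (-(r:ℤ) + 1 + (i:ℤ)) = 2 - (((r - 1 - i.1 : ℕ):ℤ) + 2) := by omega
    rw [h]
    exact Bop_window r _ (by omega)
  simp only [bdryVec, Pi.add_apply, Pi.smul_apply, smul_eq_mul, wv,
    AStrang_decomp, hB]
  ring

lemma htPhi (r : ℕ) : (∑' j : {j : ℤ // j ≤ -(r : ℤ)}, (PhiR r j.1) ^ 2)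
    = PhiR r (-(r:ℤ))^2 + PhiR r (-(r:ℤ)-1)^2 := by
  rw [tsum_eq_sum (s := ({⟨-(r:ℤ), le_refl _⟩, ⟨-(r:ℤ)-1, by omega⟩} :
      Finset {j : ℤ // j ≤ -(r:ℤ)}))]
  · rw [Finset.sum_pair (by simp only [ne_eq, Subtype.mk.injEq]; omega)]
  · intro b hb
    have hb2 := b.2
    simp only [Finset.mem_insert, Finset.mem_singleton, Subtype.ext_iff] at hb
    rw [PhiR_low r b.1 (by omega)]
    norm_num

lemma htPsi (r : ℕ) (z : ℝ) :
    (∑' j : {j : ℤ // j ≤ -(r : ℤ)}, (AStrang z (PhiR r) j.1) ^ 2)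
    = (AStrang z (PhiR r) (-(r:ℤ)))^2 + (AStrang z (PhiR r) (-(r:ℤ)-1))^2
      + (AStrang z (PhiR r) (-(r:ℤ)-2))^2 + (AStrang z (PhiR r) (-(r:ℤ)-3))^2 := by
  rw [tsum_eq_sum (s := ({⟨-(r:ℤ), le_refl _⟩, ⟨-(r:ℤ)-1, by omega⟩,
      ⟨-(r:ℤ)-2, by omega⟩, ⟨-(r:ℤ)-3, by omega⟩} : Finset {j : ℤ // j ≤ -(r:ℤ)}))]
  · rw [Finset.sum_insert (by
      simp only [Finset.mem_insert, Finset.mem_singleton, Subtype.mk.injEq]; omega)]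
    rw [Finset.sum_insert (by
      simp only [Finset.mem_insert, Finset.mem_singleton, Subtype.mk.injEq]; omega)]
    rw [Finset.sum_pair (by simp only [ne_eq, Subtype.mk.injEq]; omega)]
    ring
  · intro b hb
    have hb2 := b.2
    simp only [Finset.mem_insert, Finset.mem_singleton, Subtype.ext_iff] at hb
    rw [AStrang_low r z b.1 (by omega)]
    norm_num

/-- The second-order-in-`z` remainder of the energy difference. -/
noncomputable def rho (r : ℕ) (H : ℝ → Matrix (Fin r) (Fin r) ℝ) (z : ℝ) : ℝ :=
  (Bop (PhiR r) (-(r:ℤ)))^2 + 2 * PhiR r (-(r:ℤ)) * Cop z (PhiR r) (-(r:ℤ))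
    + 2*z*Bop (PhiR r) (-(r:ℤ)) * Cop z (PhiR r) (-(r:ℤ))
    + z^2 * (Cop z (PhiR r) (-(r:ℤ)))^2
  + ((Bop (PhiR r) (-(r:ℤ)-1))^2 + 2 * PhiR r (-(r:ℤ)-1) * Cop z (PhiR r) (-(r:ℤ)-1)
    + 2*z*Bop (PhiR r) (-(r:ℤ)-1) * Cop z (PhiR r) (-(r:ℤ)-1)
    + z^2 * (Cop z (PhiR r) (-(r:ℤ)-1))^2)
  + (Bop (PhiR r) (-(r:ℤ)-2) + z * Cop z (PhiR r) (-(r:ℤ)-2))^2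
  + (Bop (PhiR r) (-(r:ℤ)-3) + z * Cop z (PhiR r) (-(r:ℤ)-3))^2
  + bdryVec r (PhiR r) ⬝ᵥ (H z).mulVec (wv r z)
  + wv r z ⬝ᵥ (H z).mulVec (bdryVec r (PhiR r))
  + z^2 * (wv r z ⬝ᵥ (H z).mulVec (wv r z))

lemma rho_cont (r : ℕ) (H : ℝ → Matrix (Fin r) (Fin r) ℝ) (z₀ : ℝ)
    (hH : ContinuousOn H (Set.Icc 0 z₀)) :
    ContinuousOn (rho r H) (Set.Icc 0 z₀) := by
  have hcop : ∀ a : ℤ, Continuous (fun z : ℝ => Cop z (PhiR r) a) := by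
    intro a; unfold Cop; fun_prop
  have hentry : ∀ i j : Fin r, ContinuousOn (fun z => H z i j) (Set.Icc 0 z₀) :=
    fun i j => (continuous_apply_apply i j).comp_continuousOn hH
  have hdotc : ∀ (a b : ℝ → Fin r → ℝ), (∀ i, Continuous fun z => a z i) →
      (∀ i, Continuous fun z => b z i) →
      ContinuousOn (fun z => a z ⬝ᵥ (H z).mulVec (b z)) (Set.Icc 0 z₀) := by
    intro a b ha hb
    simp only [dotProduct, Matrix.mulVec]
    apply continuousOn_finset_sum
    intro i _
    apply ContinuousOn.mul ((ha i).continuousOn)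
    apply continuousOn_finset_sum
    intro j _
    exact (hentry i j).mul ((hb j).continuousOn)
  have hwc : ∀ i, Continuous fun z => wv r z i := fun i => hcop _
  have hvc : ∀ i, Continuous fun z : ℝ => bdryVec r (PhiR r) i := fun i => continuous_const
  unfold rho
  apply ContinuousOn.add
  apply ContinuousOn.add
  apply ContinuousOn.add
  · apply Continuous.continuousOn
    have := hcop (-(r:ℤ)); have := hcop (-(r:ℤ)-1)
    have := hcop (-(r:ℤ)-2); have := hcop (-(r:ℤ)-3)
    fun_prop
  · exact hdotc _ _ hvc hwc
  · exact hdotc _ _ hwc hvc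
  · exact (continuous_pow 2).continuousOn.mul (hdotc _ _ hwc hwc)

/-- The key energy identity: applying one step of the Strang scheme to the
counterexample sequence increases the modified energy by `z/6 + O(z²)`. -/
lemma key (r : ℕ) (H : ℝ → Matrix (Fin r) (Fin r) ℝ) (z : ℝ) :
    (∑' j : {j : ℤ // j ≤ -(r : ℤ)}, (AStrang z (PhiR r) j.1) ^ 2)
      + bdryVec r (AStrang z (PhiR r)) ⬝ᵥ (H z).mulVec (bdryVec r (AStrang z (PhiR r)))
    = ((∑' j : {j : ℤ // j ≤ -(r : ℤ)}, (PhiR r j.1) ^ 2)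
      + bdryVec r (PhiR r) ⬝ᵥ (H z).mulVec (bdryVec r (PhiR r)))
      + z/6 + z^2 * rho r H z := by
  rw [htPsi r z, htPhi r, hbd r z]
  rw [AStrang_decomp z (PhiR r) (-(r:ℤ)), AStrang_decomp z (PhiR r) (-(r:ℤ)-1),
      AStrang_decomp z (PhiR r) (-(r:ℤ)-2), AStrang_decomp z (PhiR r) (-(r:ℤ)-3)]
  rw [PhiR_low r (-(r:ℤ)-2) (by omega), PhiR_low r (-(r:ℤ)-3) (by omega)]
  simp only [Matrix.mulVec_add, Matrix.mulVec_smul, dotProduct_add, add_dotProduct,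
    dotProduct_smul, smul_dotProduct, smul_eq_mul, rho]
  linear_combination (2*z) * Tlem r

/-- No continuous-in-`z` finite rank symmetric modification `H` of the `ℓ²(ℤ⁻)`
norm makes the fourth order Strang scheme with first order translatory
extrapolation `Φ₂ = Φ₁ = Φ₀` an energy contraction for all small `z ≥ 0`. -/
theorem strang_first_order_extrapolation_no_energy :
    ¬ ∃ (z₀ : ℝ) (r : ℕ) (H : ℝ → Matrix (Fin r) (Fin r) ℝ),
      0 < z₀ ∧
      ContinuousOn H (Set.Icc 0 z₀) ∧
      (∀ z ∈ Set.Icc (0 : ℝ) z₀, (H z).IsSymm) ∧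
      (∀ z ∈ Set.Icc (0 : ℝ) z₀, ∀ Φ : ℤ → ℝ,
        Summable (fun j : {j : ℤ // j ≤ 0} => (Φ j.1) ^ 2) →
        Φ 2 = Φ 0 → Φ 1 = Φ 0 →
        (∑' j : {j : ℤ // j ≤ -(r : ℤ)}, (AStrang z Φ j.1) ^ 2)
            + bdryVec r (AStrang z Φ) ⬝ᵥ (H z).mulVec (bdryVec r (AStrang z Φ))
          ≤ (∑' j : {j : ℤ // j ≤ -(r : ℤ)}, (Φ j.1) ^ 2)
            + bdryVec r Φ ⬝ᵥ (H z).mulVec (bdryVec r Φ)) := by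
  rintro ⟨z₀, r, H, hz₀, hHc, -, hmain⟩
  -- the extrapolation conditions for the counterexample sequence
  have h2 : PhiR r 2 = PhiR r 0 := by
    have e0 := PhiR_spec r 0 (by omega)
    have e2 := PhiR_spec r 2 (by omega)
    norm_num at e0 e2
    rw [e0, e2]; norm_num [psi]
  have h1 : PhiR r 1 = PhiR r 0 := by
    have e1 := PhiR_spec r 1 (by omega)
    have e2 := PhiR_spec r 2 (by omega)
    norm_num at e1 e2
    rw [e1, e2]; norm_num [psi]
  -- summability
  have hsum : Summable (fun j : {j : ℤ // j ≤ 0} => (PhiR r j.1) ^ 2) := by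
    apply summable_of_ne_finset_zero
      (s := (Finset.Icc (-(r:ℤ)-1) 0).subtype (· ≤ 0))
    intro b hb
    have hb2 := b.2
    simp only [Finset.mem_subtype, Finset.mem_Icc, not_and, not_le] at hb
    rw [PhiR_low r b.1 (by omega)]
    norm_num
  -- from the assumed energy estimate: `z/6 + z² ρ(z) ≤ 0` on `[0, z₀]`
  have hle : ∀ z ∈ Set.Icc (0:ℝ) z₀, z/6 + z^2 * rho r H z ≤ 0 := by
    intro z hz
    have h := hmain z hz (PhiR r) hsum h2 h1
    rw [key r H z] at h
    linarith
  -- but `ρ` is bounded on `[0, z₀]`, so this fails for small `z > 0`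
  obtain ⟨C, hC⟩ := IsCompact.exists_bound_of_continuousOn isCompact_Icc
    (rho_cont r H z₀ hHc)
  have hC0 : 0 ≤ C := le_trans (norm_nonneg _) (hC 0 ⟨le_refl _, hz₀.le⟩)
  set ζ := min z₀ (1/(6*C+6)) with hζ
  have hζpos : 0 < ζ := lt_min hz₀ (by positivity)
  have hζmem : ζ ∈ Set.Icc (0:ℝ) z₀ := ⟨hζpos.le, min_le_left _ _⟩
  have hρb : -C ≤ rho r H ζ := by
    have h := hC ζ hζmem
    rw [Real.norm_eq_abs] at h
    linarith [(abs_le.mp h).1]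
  have hζle : ζ ≤ 1/(6*C+6) := min_le_right _ _
  have h1' : ζ * C < 1/6 := by
    have ha : ζ * C ≤ (1/(6*C+6)) * C := mul_le_mul_of_nonneg_right hζle hC0
    have hb : (1/(6*C+6)) * C < 1/6 := by
      rw [div_mul_eq_mul_div, one_mul, div_lt_iff₀ (by positivity)]
      linarith
    linarith
  have h4 := hle ζ hζmem
  nlinarith [mul_le_mul_of_nonneg_left hρb (sq_nonneg ζ),
    mul_lt_mul_of_pos_left h1' hζpos, sq_nonneg ζ, hζpos]
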